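/- Let 𝔗 be the affine fan induced by a strongly convex rational polyhedral cone τ, let ν be a ray not contained in τ with Cone(τ, ν) strongly convex and dim Cone(τ, ν) = dim τ + 1, and set 𝔛 = Ext(𝔗, ν). Then for every efficient subdivision 𝔛' of 𝔛 there exists an efficient subdivision 𝔗' of 𝔗 such that 𝔛' = Ext(𝔗', ν). -/

import Mathlib

namespace ToricPaper

open scoped BigOperators

/-- The ambient space `N_ℚ = ℚ^n`. -/
abbrev V (n : ℕ) := Fin n → ℚ

variable {n : ℕ}

/-- The cone of nonnegative rational combinations of elements of `A`. -/
def coneHull (A : Set (V n)) : Set (V n) :=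
  {x | ∃ t : Finset (V n), ↑t ⊆ A ∧ ∃ c : V n → ℚ,
    (∀ v ∈ t, 0 ≤ c v) ∧ x = ∑ v ∈ t, c v • v}

/-- A rational polyhedral cone: the cone generated by finitely many vectors. -/
def IsPolyCone (σ : Set (V n)) : Prop := ∃ S : Finset (V n), σ = coneHull (S : Set (V n))

/-- A cone is strongly convex if it contains no line. -/
def StronglyConvex (σ : Set (V n)) : Prop := ∀ x ∈ σ, -x ∈ σ → x = 0

/-- `F` is a face of `σ`, cut out by a linear functional nonnegative on `σ`. -/
def IsFaceOf (F σ : Set (V n)) : Prop :=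
  ∃ m : (V n) →ₗ[ℚ] ℚ, (∀ x ∈ σ, 0 ≤ m x) ∧ F = {x ∈ σ | m x = 0}

/-- Dimension of a cone: the rank of its linear span. -/
noncomputable def coneDim (σ : Set (V n)) : ℕ := Module.finrank ℚ (Submodule.span ℚ σ)

/-- A ray of a cone is a one-dimensional face. -/
def IsRayOf (ν σ : Set (V n)) : Prop := IsFaceOf ν σ ∧ coneDim ν = 1

/-- An abstract ray: a one-dimensional strongly convex rational polyhedral cone. -/
def IsRay (ν : Set (V n)) : Prop := IsPolyCone ν ∧ StronglyConvex ν ∧ coneDim ν = 1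

/-- All faces of a cone `τ` (the affine fan induced by `τ`). -/
def faces (τ : Set (V n)) : Set (Set (V n)) := {F | IsFaceOf F τ}

/-- The rays of a cone `τ`. -/
def raysOf (τ : Set (V n)) : Set (Set (V n)) := {ν | IsRayOf ν τ}

/-- A fan: a finite collection of strongly convex rational polyhedral cones, closed under
taking faces, such that the intersection of two cones is a face of each. -/
def IsFan (X : Set (Set (V n))) : Prop :=
  X.Finite ∧ (∀ σ ∈ X, IsPolyCone σ ∧ StronglyConvex σ) ∧
  (∀ σ ∈ X, ∀ F, IsFaceOf F σ → F ∈ X) ∧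
  (∀ σ ∈ X, ∀ σ' ∈ X, IsFaceOf (σ ∩ σ') σ ∧ IsFaceOf (σ ∩ σ') σ')

/-- The rays (one-dimensional cones) belonging to a collection of cones. -/
def raysIn (X : Set (Set (V n))) : Set (Set (V n)) := {ν | ν ∈ X ∧ coneDim ν = 1}

/-- The support of a collection of cones. -/
def support (X : Set (Set (V n))) : Set (V n) := ⋃₀ X

/-- The data of a fan quadruple `(X, !B, *C, !*H)`: three pairwise disjoint sets of rays. -/
def IsQuadData (X B C H : Set (Set (V n))) : Prop :=
  B ⊆ raysIn X ∧ C ⊆ raysIn X ∧ H ⊆ raysIn X ∧ Disjoint B C ∧ Disjoint B H ∧ Disjoint C H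

/-- The data of a fan triple `(X, !B, *C)`: two disjoint sets of rays. -/
def IsTripleData (X B C : Set (Set (V n))) : Prop :=
  B ⊆ raysIn X ∧ C ⊆ raysIn X ∧ Disjoint B C

/-- `ρ` is a sorting function for the (restricted) quadruple on the faces of `ξ`:
nonnegative on rays of `ξ` in `B`, nonpositive on rays of `ξ` in `C`, zero on rays of `ξ`
in none of `B`, `C`, `H`. -/
def IsSortingOn (ξ : Set (V n)) (B C H : Set (Set (V n))) (ρ : (V n) →ₗ[ℚ] ℚ) : Prop :=
  (∀ ν, IsRayOf ν ξ → ν ∈ B → ∀ x ∈ ν, 0 ≤ ρ x) ∧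
  (∀ ν, IsRayOf ν ξ → ν ∈ C → ∀ x ∈ ν, ρ x ≤ 0) ∧
  (∀ ν, IsRayOf ν ξ → ν ∉ B → ν ∉ C → ν ∉ H → ∀ x ∈ ν, ρ x = 0)

/-- The (restricted) affine quadruple on the faces of `ξ` admits a `Cf`-strict sorting
function: a sorting function which is moreover negative on `ν ∖ {0}` for every `ν ∈ Cf`. -/
def HasStrictSortingOn (ξ : Set (V n)) (B C H Cf : Set (Set (V n))) : Prop :=
  ∃ ρ : (V n) →ₗ[ℚ] ℚ, IsSortingOn ξ B C H ρ ∧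
    ∀ ν, IsRayOf ν ξ → ν ∈ Cf → ∀ x ∈ ν, x ≠ 0 → ρ x < 0

/-- A cone `ξ` is `E`-unsettled if no ray of `ξ` lies in `E`. -/
def Unsettled (E : Set (Set (V n))) (ξ : Set (V n)) : Prop := ∀ ν, IsRayOf ν ξ → ν ∉ E

/-- The quadruple `(X, !B, *C, !*H)` is `(Bs, Cf, Hs)`-sorted. -/
def SortedOn (X B C H Bs Cf Hs : Set (Set (V n))) : Prop :=
  ∀ ξ ∈ X, Unsettled ((B \ Bs) ∪ (H \ Hs)) ξ → HasStrictSortingOn ξ B C H Cf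

/-- Partially-sorted: `(∅, C, ∅)`-sorted. -/
def PartiallySortedOn (X B C H : Set (Set (V n))) : Prop := SortedOn X B C H ∅ C ∅

/-- Well-sorted: `(B, C, H)`-sorted. -/
def WellSortedOn (X B C H : Set (Set (V n))) : Prop := SortedOn X B C H B C H

/-- A simplicial cone is generated by linearly independent vectors. -/
def IsSimplicialCone (σ : Set (V n)) : Prop :=
  ∃ S : Finset (V n), LinearIndependent ℚ (fun v : S => (v : V n)) ∧
    σ = coneHull (S : Set (V n))

/-- A collection of cones is `E`-simplicial: every cone having a ray of `E` as a face is the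
join of that ray with a cone of the collection of one less dimension. -/
def ESimplicialOn (X E : Set (Set (V n))) : Prop :=
  ∀ ν ∈ E, ∀ σ ∈ X, IsFaceOf ν σ →
    ∃ ζ ∈ X, σ = coneHull (ζ ∪ ν) ∧ coneDim σ = coneDim ζ + 1

/-- A subdivision of a fan: a fan with the same support, every cone of which is contained in
a cone of the base. -/
def IsSubdivision (X' X : Set (Set (V n))) : Prop :=
  IsFan X' ∧ support X' = support X ∧ ∀ σ' ∈ X', ∃ σ ∈ X, σ' ⊆ σ

/-- A subdivision is efficient if it introduces no new rays. -/
def IsEfficient (X' X : Set (Set (V n))) : Prop := raysIn X' = raysIn X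

/-- `ψ` is a good (convex piecewise-linear) function for the subdivision `X'` relative to the
cones of the base fan `X`: on each cone `τ` of `X`, `ψ` is convex, linear on each cone of
`X'` contained in `τ`, and the maximal subcones of linearity of `ψ` inside `τ` are exactly
the cones of `X'` (i.e. any convex subset of `τ` on which `ψ` is linear lies in one of them). -/
def IsGoodFor (X X' : Set (Set (V n))) (ψ : V n → ℚ) : Prop :=
  ∀ τ ∈ X, ConvexOn ℚ τ ψ ∧
    (∀ σ' ∈ X', σ' ⊆ τ → ∃ m : (V n) →ₗ[ℚ] ℚ, ∀ x ∈ σ', ψ x = m x) ∧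
    (∀ (m : (V n) →ₗ[ℚ] ℚ) (t : Set (V n)), t ⊆ τ → Convex ℚ t →
      (∀ x ∈ t, ψ x = m x) → ∃ σ' ∈ X', σ' ⊆ τ ∧ t ⊆ σ')

/-- Sign conditions of a good sorting function with respect to the quadruple data on `X'`. -/
def SignedOn (X' B' C' H' : Set (Set (V n))) (ψ : V n → ℚ) : Prop :=
  (∀ ν ∈ B', ∀ x ∈ ν, 0 ≤ ψ x) ∧ (∀ ν ∈ C', ∀ x ∈ ν, ψ x ≤ 0) ∧
  (∀ ν ∈ raysIn X', ν ∉ B' → ν ∉ C' → ν ∉ H' → ∀ x ∈ ν, ψ x = 0)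

/-- Sign conditions restricted to the rays contained in a cone `τ`. -/
def SignedOnIn (τ : Set (V n)) (X' B' C' H' : Set (Set (V n))) (ψ : V n → ℚ) : Prop :=
  (∀ ν ∈ B', ν ⊆ τ → ∀ x ∈ ν, 0 ≤ ψ x) ∧ (∀ ν ∈ C', ν ⊆ τ → ∀ x ∈ ν, ψ x ≤ 0) ∧
  (∀ ν ∈ raysIn X', ν ⊆ τ → ν ∉ B' → ν ∉ C' → ν ∉ H' → ∀ x ∈ ν, ψ x = 0)

/-- A convex subdivision, with respect to a fan quadruple structure on `X'`. -/
def IsConvexSubdiv (X' X B' C' H' : Set (Set (V n))) : Prop :=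
  IsSubdivision X' X ∧ ∃ ψ : V n → ℚ, IsGoodFor X X' ψ ∧ SignedOn X' B' C' H' ψ

/-- A locally-convex subdivision: for each cone of the base there is a good sorting function
on that cone. -/
def IsLocallyConvexSubdiv (X' X B' C' H' : Set (Set (V n))) : Prop :=
  IsSubdivision X' X ∧
    ∀ τ ∈ X, ∃ ψ : V n → ℚ, IsGoodFor {τ} X' ψ ∧ SignedOnIn τ X' B' C' H' ψ

/-- Star subdivision of `X` at a ray `ν` contained in the support of `X`. -/
def starSubdiv (X : Set (Set (V n))) (ν : Set (V n)) : Set (Set (V n)) :=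
  {σ | σ ∈ X ∧ ¬ ν ⊆ σ} ∪
  {τ | ∃ σ ∈ X, ν ⊆ σ ∧ ∃ ξ, IsFaceOf ξ σ ∧ ¬ ν ⊆ ξ ∧ τ = coneHull (ξ ∪ ν)}

/-- The set `S` of facets used in the extension construction `Ext(𝔗, ν)`. -/
noncomputable def extS (τ ν : Set (V n)) : Set (Set (V n)) :=
  if coneDim (coneHull (τ ∪ ν)) = coneDim τ + 1 then {τ}
  else {ζ | (IsFaceOf ζ τ ∧ coneDim ζ + 1 = coneDim τ) ∧
    ∃ m : (V n) →ₗ[ℚ] ℚ, (∀ x ∈ ζ, m x = 0) ∧ (∃ v ∈ ν, v ≠ 0 ∧ m v = -1) ∧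
      ∀ x ∈ τ, x ∉ ζ → 0 < m x}

/-- All faces of cones of `extS τ ν`. -/
noncomputable def extFaces (τ ν : Set (V n)) : Set (Set (V n)) :=
  {ξ | ∃ ζ ∈ extS τ ν, IsFaceOf ξ ζ}

/-- The extension `Ext(𝔗, ν)` of the affine fan of `τ` by the ray `ν`. -/
noncomputable def Ext (τ ν : Set (V n)) : Set (Set (V n)) :=
  {ν} ∪ faces τ ∪ (fun ξ => coneHull (ξ ∪ ν)) '' extFaces τ ν

/-- The extension `Ext(𝔗', ν)` of a subdivision `𝒯'` of the affine fan of `τ` by the ray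
`ν`. -/
noncomputable def ExtSub (T' : Set (Set (V n))) (τ ν : Set (V n)) : Set (Set (V n)) :=
  {ν} ∪ T' ∪ (fun ξ => coneHull (ξ ∪ ν)) ''
    {ξ | ∃ ζ' ∈ T', (∃ ζ ∈ extS τ ν, ζ' ⊆ ζ) ∧ IsFaceOf ξ ζ'}

/-- Sequential convexity of a sequence of star subdivisions (the list gives the rays in the
order in which the star subdivisions are performed). -/
def SeqConvex (B C H : Set (Set (V n))) : Set (Set (V n)) → List (Set (V n)) → Prop
  | _, [] => True
  | X, ν :: rest =>
      IsLocallyConvexSubdiv (starSubdiv X ν) X B C H ∧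
      SeqConvex B C H (starSubdiv X ν) rest

/-!
Write `ν = ℚ≥0 v` and choose a functional `m` vanishing on `τ` with `m v = 1`; it exists because
`dim Cone(τ, ν) = dim τ + 1` forces `v ∉ span τ`. A cone of an efficient subdivision `𝔛'` of
`Ext(𝔗, ν)` has only `ν` and rays of `τ` as rays, and a strongly convex polyhedral cone is
generated by its rays (Minkowski's theorem, which follows from Weyl's description of the cone by
finitely many half-spaces, itself obtained by Fourier–Motzkin elimination). Hence every cone `σ'`
of `𝔛'` either lies in `m = 0`, i.e. in `τ`, or equals `Cone(σ' ∩ {m = 0}, ν)`, and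
`𝔗' = {σ' ∈ 𝔛' | σ' ⊆ τ}` works. The one inclusion needing thought, `Cone(ξ, ν) ∈ 𝔛'` for
`ξ ∈ 𝔗'`, comes from the cone of `𝔛'` containing `x + v` for a relative interior point `x` of
`ξ`: it is `Cone(D, ν)` with `ξ` a face of `D`.
-/
theorem coneHull_eq_hull (A : Set (V n)) : coneHull A = PointedCone.hull ℚ A := by
  ext x
  constructor
  · rintro ⟨t, ht, c, hc, rfl⟩
    exact Submodule.sum_mem _ fun v hv =>
      (PointedCone.hull ℚ A).smul_mem (hc v hv) (PointedCone.subset_hull (ht hv))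
  · intro hx
    obtain ⟨c, hcA, hc0, rfl⟩ := PointedCone.mem_hull_set.mp hx
    exact ⟨c.support, hcA, c, fun v _ => hc0 v, rfl⟩

theorem subset_coneHull (A : Set (V n)) : A ⊆ coneHull A := by
  rw [coneHull_eq_hull]
  exact PointedCone.subset_hull

theorem zero_mem_coneHull (A : Set (V n)) : (0 : V n) ∈ coneHull A :=
  ⟨∅, by simp, 0, by simp, by simp⟩

theorem coneHull_mono {A B : Set (V n)} (h : A ⊆ B) : coneHull A ⊆ coneHull B := by
  simp only [coneHull_eq_hull]
  exact Submodule.span_mono h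

theorem coneHull_subset_coe {A : Set (V n)} {K : PointedCone ℚ (V n)} :
    coneHull A ⊆ K ↔ A ⊆ K := by
  rw [coneHull_eq_hull]
  exact Submodule.span_le

theorem coneHull_coe (K : PointedCone ℚ (V n)) : coneHull (K : Set (V n)) = K := by
  rw [coneHull_eq_hull]
  exact congrArg SetLike.coe (Submodule.span_eq K)

theorem coneHull_coneHull (A : Set (V n)) : coneHull (coneHull A) = coneHull A := by
  rw [coneHull_eq_hull A, coneHull_coe]

theorem IsPolyCone.exists_eq_coe {σ : Set (V n)} (hσ : IsPolyCone σ) :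
    ∃ K : PointedCone ℚ (V n), σ = K := by
  obtain ⟨S, rfl⟩ := hσ
  exact ⟨_, coneHull_eq_hull _⟩

theorem mem_coneHull_singleton {v x : V n} :
    x ∈ coneHull {v} ↔ ∃ c : ℚ, 0 ≤ c ∧ x = c • v := by
  rw [coneHull_eq_hull, SetLike.mem_coe, Submodule.mem_span_singleton]
  constructor
  · rintro ⟨⟨c, hc⟩, rfl⟩
    exact ⟨c, hc, rfl⟩
  · rintro ⟨c, hc, rfl⟩
    exact ⟨⟨c, hc⟩, rfl⟩

theorem mem_coneHull_union {A B : Set (V n)} {x : V n} :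
    x ∈ coneHull (A ∪ B) ↔ ∃ y ∈ coneHull A, ∃ z ∈ coneHull B, x = y + z := by
  simp only [coneHull_eq_hull, SetLike.mem_coe, PointedCone.hull, Submodule.span_union,
    Submodule.mem_sup, eq_comm (a := x)]

theorem mem_coneHull_union_singleton {τ : Set (V n)} (hτ : IsPolyCone τ) {v x : V n} :
    x ∈ coneHull (τ ∪ coneHull {v}) ↔ ∃ y ∈ τ, ∃ c : ℚ, 0 ≤ c ∧ x = y + c • v := by
  obtain ⟨K, rfl⟩ := hτ.exists_eq_coe
  rw [mem_coneHull_union, coneHull_coe, coneHull_coneHull]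
  constructor
  · rintro ⟨y, hy, z, hz, rfl⟩
    obtain ⟨c, hc, rfl⟩ := mem_coneHull_singleton.mp hz
    exact ⟨y, hy, c, hc, rfl⟩
  · rintro ⟨y, hy, c, hc, rfl⟩
    exact ⟨y, hy, c • v, mem_coneHull_singleton.mpr ⟨c, hc, rfl⟩, rfl⟩

theorem span_coneHull (A : Set (V n)) :
    Submodule.span ℚ (coneHull A) = Submodule.span ℚ A := by
  refine le_antisymm ?_ (Submodule.span_mono (subset_coneHull A))
  rw [Submodule.span_le, coneHull_eq_hull]
  exact PointedCone.hull_le_span ℚ A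

theorem map_nonneg_of_mem_coneHull {A : Set (V n)} {ℓ : V n →ₗ[ℚ] ℚ}
    (hA : ∀ a ∈ A, 0 ≤ ℓ a) {x : V n} (hx : x ∈ coneHull A) : 0 ≤ ℓ x :=
  coneHull_subset_coe (K := PointedCone.comap ℓ (PointedCone.positive ℚ ℚ)) |>.mpr hA hx

theorem map_eq_zero_of_mem_coneHull {A : Set (V n)} {ℓ : V n →ₗ[ℚ] ℚ}
    (hA : ∀ a ∈ A, ℓ a = 0) {x : V n} (hx : x ∈ coneHull A) : ℓ x = 0 :=
  coneHull_subset_coe (K := PointedCone.ofSubmodule (LinearMap.ker ℓ)) |>.mpr hA hx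

theorem IsFaceOf.subset {F σ : Set (V n)} (h : IsFaceOf F σ) : F ⊆ σ := by
  obtain ⟨ℓ, -, rfl⟩ := h
  exact Set.sep_subset σ _

theorem isFaceOf_refl (σ : Set (V n)) : IsFaceOf σ σ :=
  ⟨0, fun _ _ => le_rfl, by simp⟩

theorem StronglyConvex.mono {F σ : Set (V n)} (h : StronglyConvex σ) (hF : F ⊆ σ) :
    StronglyConvex F :=
  fun x hx hnx => h x (hF hx) (hF hnx)

theorem mem_coneHull_sep_of_map_eq_zero {A : Set (V n)} {ℓ : V n →ₗ[ℚ] ℚ}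
    (hA : ∀ a ∈ A, 0 ≤ ℓ a) {x : V n} (hx : x ∈ coneHull A) (h : ℓ x = 0) :
    x ∈ coneHull {a ∈ A | ℓ a = 0} := by
  obtain ⟨t, ht, c, hc, rfl⟩ := hx
  have hterms : ∀ a ∈ t, c a * ℓ a = 0 := by
    refine (Finset.sum_eq_zero_iff_of_nonneg fun a ha => mul_nonneg (hc a ha) (hA a (ht ha))).mp ?_
    simpa only [map_sum, map_smul, smul_eq_mul] using h
  rw [coneHull_eq_hull]
  refine Submodule.sum_mem _ fun a ha => ?_
  rcases mul_eq_zero.mp (hterms a ha) with hca | hℓa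
  · simp [hca]
  · exact PointedCone.smul_mem _ (hc a ha) (PointedCone.subset_hull ⟨ht ha, hℓa⟩)

theorem IsFaceOf.isPolyCone {F σ : Set (V n)} (h : IsFaceOf F σ) (hσ : IsPolyCone σ) :
    IsPolyCone F := by
  obtain ⟨S, rfl⟩ := hσ
  obtain ⟨ℓ, hℓ, rfl⟩ := h
  refine ⟨S.filter (ℓ · = 0), Set.Subset.antisymm ?_ ?_⟩
  · rintro x ⟨hx, hℓx⟩
    rw [Finset.coe_filter]
    exact mem_coneHull_sep_of_map_eq_zero (fun a ha => hℓ a (subset_coneHull _ ha)) hx hℓx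
  · intro x hx
    rw [Finset.coe_filter] at hx
    exact ⟨coneHull_mono (Set.sep_subset _ _) hx,
      map_eq_zero_of_mem_coneHull (fun a ha => ha.2) hx⟩

theorem IsFaceOf.trans {G F σ : Set (V n)} (hG : IsFaceOf G F) (hF : IsFaceOf F σ)
    (hσ : IsPolyCone σ) : IsFaceOf G σ := by
  obtain ⟨S, rfl⟩ := hσ
  obtain ⟨ℓ, hℓ, rfl⟩ := hF
  obtain ⟨ℓ₂, hℓ₂, rfl⟩ := hG
  have hℓS : ∀ s ∈ (S : Set (V n)), 0 ≤ ℓ s := fun s hs => hℓ s (subset_coneHull _ hs)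
  -- a large multiple of `ℓ` makes `ℓ'` positive on the generators off the face `ℓ = 0`
  obtain ⟨M, hM⟩ := ((S : Set (V n)).toFinite.image fun s => -ℓ₂ s / ℓ s).bddAbove
  set ℓ' := ℓ₂ + (M + 1) • ℓ
  have hpos : ∀ s ∈ (S : Set (V n)), 0 < ℓ s → 0 < ℓ' s := by
    intro s hs hℓs
    have := (div_le_iff₀ hℓs).mp (hM ⟨s, hs, rfl⟩)
    simp only [ℓ', LinearMap.add_apply, LinearMap.smul_apply, smul_eq_mul]
    nlinarith
  have hℓ'S : ∀ s ∈ (S : Set (V n)), 0 ≤ ℓ' s := by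
    intro s hs
    rcases (hℓS s hs).lt_or_eq with hℓs | hℓs
    · exact (hpos s hs hℓs).le
    · simpa [ℓ', ← hℓs] using hℓ₂ s ⟨subset_coneHull _ hs, hℓs.symm⟩
  refine ⟨ℓ', fun x hx => map_nonneg_of_mem_coneHull hℓ'S hx, Set.ext fun x => ⟨?_, ?_⟩⟩
  · rintro ⟨⟨hx, hℓx⟩, hℓ₂x⟩
    exact ⟨hx, by simp [ℓ', hℓx, hℓ₂x]⟩
  · rintro ⟨hx, hℓ'x⟩
    have hℓx : ℓ x = 0 := by
      refine map_eq_zero_of_mem_coneHull (fun s hs => ?_)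
        (mem_coneHull_sep_of_map_eq_zero hℓ'S hx hℓ'x)
      exact ((hℓS s hs.1).lt_or_eq.resolve_left fun h => (hpos s hs.1 h).ne' hs.2).symm
    refine ⟨⟨hx, hℓx⟩, ?_⟩
    simpa [ℓ', hℓx] using hℓ'x

theorem IsFaceOf.coneDim_lt {F σ : Set (V n)} (h : IsFaceOf F σ) (hne : F ≠ σ) :
    coneDim F < coneDim σ := by
  obtain ⟨ℓ, -, rfl⟩ := h
  by_contra hle
  have hspan := Submodule.eq_of_le_of_finrank_le
    (Submodule.span_mono (Set.sep_subset σ fun x => ℓ x = 0)) (not_lt.mp hle)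
  refine hne (Set.sep_eq_self_iff_mem_true.mpr fun x hx => ?_)
  have hx' : x ∈ Submodule.span ℚ {x ∈ σ | ℓ x = 0} := hspan ▸ Submodule.subset_span hx
  exact (Submodule.span_le (p := LinearMap.ker ℓ)).mpr (fun y hy => hy.2) hx'

theorem IsPolyCone.exists_mem_forall_isFaceOf {σ : Set (V n)} (hσ : IsPolyCone σ) :
    ∃ x ∈ σ, ∀ F, IsFaceOf F σ → x ∈ F → F = σ := by
  obtain ⟨S, rfl⟩ := hσ
  refine ⟨∑ s ∈ S, s, ⟨S, subset_rfl, 1, fun _ _ => zero_le_one, by simp⟩, ?_⟩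
  rintro F ⟨ℓ, hℓ, rfl⟩ ⟨-, hsum⟩
  have hℓS : ∀ s ∈ S, ℓ s = 0 := by
    refine (Finset.sum_eq_zero_iff_of_nonneg fun s hs => hℓ s (subset_coneHull _ hs)).mp ?_
    rwa [← map_sum]
  exact Set.sep_eq_self_iff_mem_true.mpr fun x hx => map_eq_zero_of_mem_coneHull hℓS hx

theorem exists_nonneg_forall_mul_le_iff {ι : Type*} (s : Finset ι) (a b : ι → ℚ) :
    (∃ t : ℚ, 0 ≤ t ∧ ∀ i ∈ s, t * b i ≤ a i) ↔
      (∀ i ∈ s, 0 ≤ b i → 0 ≤ a i) ∧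
        ∀ i ∈ s, ∀ j ∈ s, 0 < b i → b j < 0 → 0 ≤ b i * a j - b j * a i := by
  constructor
  · rintro ⟨t, ht, h⟩
    refine ⟨fun i hi hbi => (mul_nonneg ht hbi).trans (h i hi), fun i hi j hj hbi hbj => ?_⟩
    nlinarith [h i hi, h j hj]
  · rintro ⟨hup, hpair⟩
    classical
    -- `t` is the largest of the lower bounds `a j / b j` (for `b j < 0`) and `0`
    set E := insert 0 ((s.filter (b · < 0)).image fun j => a j / b j)
    have hE : E.Nonempty := Finset.insert_nonempty _ _
    refine ⟨E.max' hE, E.le_max' 0 (Finset.mem_insert_self _ _), fun i hi => ?_⟩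
    rcases lt_trichotomy (b i) 0 with hbi | hbi | hbi
    · have hle : a i / b i ≤ E.max' hE := E.le_max' _ (Finset.mem_insert_of_mem
        (Finset.mem_image_of_mem _ (Finset.mem_filter.mpr ⟨hi, hbi⟩)))
      rwa [div_le_iff_of_neg hbi] at hle
    · simpa [hbi] using hup i hi hbi.ge
    · rw [← le_div_iff₀ hbi]
      rcases Finset.mem_insert.mp (E.max'_mem hE) with h0 | hmem
      · rw [h0]
        exact div_nonneg (hup i hi hbi.le) hbi.le
      · obtain ⟨j, hj, hj'⟩ := Finset.mem_image.mp hmem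
        obtain ⟨hj, hbj⟩ := Finset.mem_filter.mp hj
        rw [← hj', div_le_iff_of_neg hbj, div_mul_eq_mul_div, div_le_iff₀ hbi]
        linarith [hpair i hi j hj hbi hbj]

theorem mem_coneHull_insert {u x : V n} {A : Set (V n)} :
    x ∈ coneHull (insert u A) ↔ ∃ t : ℚ, 0 ≤ t ∧ x - t • u ∈ coneHull A := by
  rw [Set.insert_eq, mem_coneHull_union]
  constructor
  · rintro ⟨z, hz, y, hy, rfl⟩
    obtain ⟨t, ht, rfl⟩ := mem_coneHull_singleton.mp hz
    exact ⟨t, ht, by rwa [add_sub_cancel_left]⟩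
  · rintro ⟨t, ht, hx⟩
    exact ⟨t • u, mem_coneHull_singleton.mpr ⟨t, ht, rfl⟩, _, hx, (add_sub_cancel _ _).symm⟩

theorem IsPolyCone.exists_finset_dual {σ : Set (V n)} (hσ : IsPolyCone σ) :
    ∃ L : Finset (V n →ₗ[ℚ] ℚ), σ = {x | ∀ ℓ ∈ L, 0 ≤ ℓ x} := by
  classical
  obtain ⟨S, rfl⟩ := hσ
  induction S using Finset.induction_on with
  | empty =>
    refine ⟨Finset.univ.image (fun i => LinearMap.proj i) ∪
      Finset.univ.image (fun i => -LinearMap.proj i), Set.ext fun x => ?_⟩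
    rw [Finset.coe_empty, coneHull_eq_hull, PointedCone.hull, Submodule.span_empty]
    simp only [Submodule.bot_coe, Set.mem_singleton_iff, Set.mem_ofPred_eq, Finset.mem_union,
      Finset.mem_image, Finset.mem_univ, true_and]
    constructor
    · rintro rfl ℓ (⟨i, rfl⟩ | ⟨i, rfl⟩) <;> simp
    · intro h
      funext i
      have h₁ := h _ (Or.inl ⟨i, rfl⟩)
      have h₂ := h _ (Or.inr ⟨i, rfl⟩)
      simp only [LinearMap.neg_apply, LinearMap.proj_apply] at h₁ h₂
      simp only [Pi.zero_apply]
      linarith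
  | insert u S _ ih =>
    obtain ⟨L, hL⟩ := ih
    refine ⟨L.filter (0 ≤ · u) ∪ ((L ×ˢ L).filter (fun p => 0 < p.1 u ∧ p.2 u < 0)).image
      (fun p => p.1 u • p.2 - p.2 u • p.1), Set.ext fun x => ?_⟩
    rw [Finset.coe_insert, mem_coneHull_insert, hL]
    simp only [Set.mem_ofPred_eq, map_sub, map_smul, smul_eq_mul, sub_nonneg]
    rw [exists_nonneg_forall_mul_le_iff L (fun ℓ => ℓ x) (fun ℓ => ℓ u)]
    simp only [Finset.mem_union, Finset.mem_filter, Finset.mem_image, Finset.mem_product,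
      Prod.exists, or_imp, forall_and, forall_exists_index, and_imp]
    refine and_congr_right fun _ =>
      ⟨fun h ℓ i j hi hj hiu hju hℓ => ?_, fun h i hi j hj hiu hju => ?_⟩
    · simpa [← hℓ] using h i hi j hj hiu hju
    · simpa using h _ i j hi hj hiu hju rfl

theorem exists_sub_smul_mem_of_neg_notMem {σ : Set (V n)} {L : Finset (V n →ₗ[ℚ] ℚ)}
    (hL : σ = {x | ∀ ℓ ∈ L, 0 ≤ ℓ x}) {p q : V n} (hp : p ∈ σ) (hq : -q ∉ σ) :
    ∃ t : ℚ, 0 ≤ t ∧ p - t • q ∈ σ ∧ ∃ ℓ ∈ L, 0 < ℓ q ∧ ℓ (p - t • q) = 0 := by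
  subst hL
  obtain ⟨ℓ₁, hℓ₁, hℓ₁q⟩ : ∃ ℓ ∈ L, 0 < ℓ q := by
    by_contra! h
    exact hq fun ℓ hℓ => by simpa using h ℓ hℓ
  obtain ⟨ℓ₀, hℓ₀, hmin⟩ := Finset.exists_min_image (L.filter (0 < · q)) (fun ℓ => ℓ p / ℓ q)
    ⟨ℓ₁, Finset.mem_filter.mpr ⟨hℓ₁, hℓ₁q⟩⟩
  obtain ⟨hℓ₀, hℓ₀q⟩ := Finset.mem_filter.mp hℓ₀
  refine ⟨ℓ₀ p / ℓ₀ q, div_nonneg (hp ℓ₀ hℓ₀) hℓ₀q.le, fun ℓ hℓ => ?_, ℓ₀, hℓ₀, hℓ₀q, ?_⟩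
  · rw [map_sub, map_smul, smul_eq_mul, sub_nonneg]
    rcases le_or_gt (ℓ q) 0 with hℓq | hℓq
    · nlinarith [hp ℓ hℓ, div_nonneg (hp ℓ₀ hℓ₀) hℓ₀q.le]
    · exact (le_div_iff₀ hℓq).mp (hmin ℓ (Finset.mem_filter.mpr ⟨hℓ, hℓq⟩))
  · rw [map_sub, map_smul, smul_eq_mul, div_mul_cancel₀ _ hℓ₀q.ne', sub_self]

theorem mem_of_sub_smul_mem_of_sub_smul_mem {K R : PointedCone ℚ (V n)}
    (hK : StronglyConvex (K : Set (V n))) (hRK : R ≤ K) {x b : V n} (hx : x ∈ K)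
    (hxb : b ∉ Submodule.span ℚ {x}) {s t : ℚ} (hs : 0 ≤ s)
    (hx' : x - s • b ∈ R) (hb' : b - t • x ∈ R) : x ∈ R := by
  by_cases hx0 : x = 0
  · exact hx0 ▸ R.zero_mem
  have hsum : (x - s • b) + s • (b - t • x) = (1 - s * t) • x := by module
  have hsumR : (1 - s * t) • x ∈ R := hsum ▸ R.add_mem hx' (R.smul_mem hs hb')
  rcases lt_or_ge (s * t) 1 with hlt | hge
  · have := R.smul_mem (inv_nonneg.mpr (sub_pos.mpr hlt).le) hsumR
    rwa [smul_smul, inv_mul_cancel₀ (sub_pos.mpr hlt).ne', one_smul] at this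
  -- otherwise `(1 - s * t) • x` lies in `K ∩ -K`, and then so does `x - s • b`
  have hzero : (1 - s * t) • x = 0 :=
    hK _ (hRK hsumR) (by rw [← neg_smul]; exact K.smul_mem (by linarith) hx)
  have hxb' : x - s • b = 0 := by
    refine hK _ (hRK hx') ?_
    rw [neg_eq_of_add_eq_zero_right (hsum.trans hzero)]
    exact hRK (R.smul_mem hs hb')
  have hs0 : s ≠ 0 := by
    rintro rfl
    exact hx0 (by simpa using hxb')
  refine absurd ?_ hxb
  rw [show b = s⁻¹ • x by rw [sub_eq_zero.mp hxb', smul_smul, inv_mul_cancel₀ hs0, one_smul]]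
  exact Submodule.smul_mem _ _ (Submodule.mem_span_singleton_self x)

theorem coneDim_eq_one_of_subset_span_singleton {σ : Set (V n)} {x : V n} (hx : x ∈ σ)
    (hx0 : x ≠ 0) (h : σ ⊆ Submodule.span ℚ {x}) : coneDim σ = 1 := by
  refine le_antisymm ?_ (Nat.one_le_iff_ne_zero.mpr fun h0 => hx0 ?_)
  · rw [← finrank_span_singleton (K := ℚ) hx0]
    exact Submodule.finrank_mono (Submodule.span_le.mpr h)
  · have hx' := Submodule.subset_span (R := ℚ) hx
    rwa [Submodule.finrank_eq_zero.mp h0, SetLike.mem_coe, Submodule.mem_bot] at hx'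

theorem IsFaceOf.coneHull_raysOf_subset {F σ : Set (V n)} (hF : IsFaceOf F σ)
    (hσ : IsPolyCone σ) : coneHull (⋃₀ raysOf F) ⊆ coneHull (⋃₀ raysOf σ) :=
  coneHull_mono <| Set.sUnion_mono fun _ hr => ⟨hr.1.trans hF hσ, hr.2⟩

theorem IsPolyCone.subset_coneHull_raysOf {σ : Set (V n)} (hσ : IsPolyCone σ)
    (hsc : StronglyConvex σ) : σ ⊆ coneHull (⋃₀ raysOf σ) := by
  induction hd : coneDim σ using Nat.strong_induction_on generalizing σ with
  | _ d ih =>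
  obtain ⟨L, hL⟩ := hσ.exists_finset_dual
  have hbdry : ∀ y ∈ σ, ∀ q ∈ σ, ∀ ℓ ∈ L, 0 < ℓ q → ℓ y = 0 →
      y ∈ coneHull (⋃₀ raysOf σ) := by
    intro y hy q hq ℓ hℓ hℓq hℓy
    have hF : IsFaceOf {x ∈ σ | ℓ x = 0} σ := ⟨ℓ, fun x hx => (hL ▸ hx : _) ℓ hℓ, rfl⟩
    have hne : {x ∈ σ | ℓ x = 0} ≠ σ := fun h => hℓq.ne' ((Set.ext_iff.mp h q).mpr hq).2
    exact hF.coneHull_raysOf_subset hσ <| ih _ (hd ▸ hF.coneDim_lt hne) (hF.isPolyCone hσ)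
      (hsc.mono hF.subset) rfl ⟨hy, hℓy⟩
  intro x hx
  obtain ⟨K, rfl⟩ := hσ.exists_eq_coe
  by_cases hx0 : x = 0
  · exact hx0 ▸ zero_mem_coneHull _
  by_cases hspan : (K : Set (V n)) ⊆ Submodule.span ℚ {x}
  · exact subset_coneHull _
      ⟨_, ⟨isFaceOf_refl _, coneDim_eq_one_of_subset_span_singleton hx hx0 hspan⟩, hx⟩
  -- push `x` along `b` and `b` along `x` to the boundary of `σ`, where induction applies
  obtain ⟨b, hb, hxb⟩ := Set.not_subset.mp hspan
  have hb0 : b ≠ 0 := fun h => hxb (h ▸ Submodule.zero_mem _)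
  obtain ⟨s, hs, hxs, ℓ, hℓ, hℓb, hℓx⟩ :=
    exists_sub_smul_mem_of_neg_notMem hL hx fun h => hb0 (hsc b hb h)
  obtain ⟨t, ht, hbt, ℓ', hℓ', hℓ'x, hℓ'b⟩ :=
    exists_sub_smul_mem_of_neg_notMem hL hb fun h => hx0 (hsc x hx h)
  rw [coneHull_eq_hull] at hbdry ⊢
  refine mem_of_sub_smul_mem_of_sub_smul_mem hsc ?_ hx hxb hs
    (hbdry _ hxs b hb ℓ hℓ hℓb hℓx) (hbdry _ hbt x hx ℓ' hℓ' hℓ'x hℓ'b)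
  exact Submodule.span_le.mpr (Set.sUnion_subset fun r hr => hr.1.subset)

theorem span_eq_span_singleton_of_coneDim_eq_one {μ : Set (V n)} (h : coneDim μ = 1) {v : V n}
    (hv : v ∈ μ) (hv0 : v ≠ 0) : Submodule.span ℚ μ = Submodule.span ℚ {v} :=
  (Submodule.eq_of_le_of_finrank_le (Submodule.span_mono (Set.singleton_subset_iff.mpr hv))
    (by rw [finrank_span_singleton hv0]; exact h.le)).symm

theorem IsRay.exists_eq_coneHull_singleton {ν : Set (V n)} (hν : IsRay ν) :
    ∃ v : V n, v ≠ 0 ∧ ν = coneHull {v} := by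
  obtain ⟨hpoly, hsc, hdim⟩ := hν
  obtain ⟨K, rfl⟩ := hpoly.exists_eq_coe
  obtain ⟨w, hw, hw0⟩ : ∃ w ∈ K, w ≠ 0 := by
    by_contra! h
    have hbot : Submodule.span ℚ (K : Set (V n)) = ⊥ :=
      le_bot_iff.mp (Submodule.span_le.mpr fun x hx => by simp [h x hx])
    rw [coneDim, hbot, finrank_bot] at hdim
    exact zero_ne_one hdim
  refine ⟨w, hw0, Set.Subset.antisymm (fun y hy => ?_) (coneHull_subset_coe.mpr (by simpa))⟩
  have hy' := Submodule.subset_span (R := ℚ) hy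
  rw [span_eq_span_singleton_of_coneDim_eq_one hdim hw hw0, SetLike.mem_coe,
    Submodule.mem_span_singleton] at hy'
  obtain ⟨c, rfl⟩ := hy'
  rcases le_or_gt 0 c with hc | hc
  · exact mem_coneHull_singleton.mpr ⟨c, hc, rfl⟩
  · have hneg : -(c • w) ∈ K := by
      rw [← neg_smul]
      exact K.smul_mem (neg_nonneg.mpr hc.le) hw
    rw [hsc _ hy hneg]
    exact zero_mem_coneHull _

theorem exists_dual_eq_zero_of_notMem {K E : Type*} [Field K] [AddCommGroup E] [Module K E]
    {p : Submodule K E} {v : E} (hv : v ∉ p) :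
    ∃ m : E →ₗ[K] K, (∀ x ∈ p, m x = 0) ∧ m v = 1 := by
  obtain ⟨f, hf, hp⟩ := p.exists_dual_map_eq_bot_of_notMem hv inferInstance
  refine ⟨(f v)⁻¹ • f, fun x hx => ?_, by simp [hf]⟩
  have hfx : f x ∈ p.map f := Submodule.mem_map_of_mem hx
  rw [hp, Submodule.mem_bot] at hfx
  simp [hfx]

theorem notMem_span_of_coneDim_eq {τ : Set (V n)} {v : V n}
    (h : coneDim (coneHull (τ ∪ coneHull {v})) = coneDim τ + 1) : v ∉ Submodule.span ℚ τ := by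
  intro hv
  have hspan : Submodule.span ℚ (coneHull (τ ∪ coneHull {v})) = Submodule.span ℚ τ := by
    rw [span_coneHull, Submodule.span_union, span_coneHull,
      sup_eq_left.mpr ((Submodule.span_singleton_le_iff_mem _ _).mpr hv)]
  rw [coneDim, hspan] at h
  exact Nat.succ_ne_self _ h.symm

theorem sub_smul_mem_of_mem_coneHull_union {τ : Set (V n)} (hτ : IsPolyCone τ) {v : V n}
    {m : V n →ₗ[ℚ] ℚ} (hm : ∀ x ∈ τ, m x = 0) (hmv : m v = 1) {x : V n}
    (hx : x ∈ coneHull (τ ∪ coneHull {v})) : 0 ≤ m x ∧ x - m x • v ∈ τ := by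
  obtain ⟨y, hy, c, hc, rfl⟩ := (mem_coneHull_union_singleton hτ).mp hx
  have hmx : m (y + c • v) = c := by simp [hm y hy, hmv]
  rw [hmx, add_sub_cancel_right]
  exact ⟨hc, hy⟩

section Ext

variable {τ ν : Set (V n)}

theorem support_faces (τ : Set (V n)) : support (faces τ) = τ :=
  Set.Subset.antisymm (Set.sUnion_subset fun _ hF => IsFaceOf.subset hF)
    (Set.subset_sUnion_of_mem (isFaceOf_refl τ))

theorem Ext_eq_of_coneDim_eq (h : coneDim (coneHull (τ ∪ ν)) = coneDim τ + 1) :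
    Ext τ ν = {ν} ∪ faces τ ∪ (fun ξ => coneHull (ξ ∪ ν)) '' faces τ := by
  simp only [Ext, extFaces, extS, if_pos h, Set.mem_singleton_iff, exists_eq_left]
  rfl

theorem ExtSub_eq_of_coneDim_eq (h : coneDim (coneHull (τ ∪ ν)) = coneDim τ + 1)
    (T' : Set (Set (V n))) : ExtSub T' τ ν = {ν} ∪ T' ∪
      (fun ξ => coneHull (ξ ∪ ν)) '' {ξ | ∃ ζ ∈ T', ζ ⊆ τ ∧ IsFaceOf ξ ζ} := by
  simp only [ExtSub, extS, if_pos h, Set.mem_singleton_iff, exists_eq_left]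

theorem support_Ext_eq_of_coneDim_eq (h : coneDim (coneHull (τ ∪ ν)) = coneDim τ + 1) :
    support (Ext τ ν) = coneHull (τ ∪ ν) := by
  refine Set.Subset.antisymm (Set.sUnion_subset ?_)
    (Set.subset_sUnion_of_mem (Ext_eq_of_coneDim_eq h ▸ Or.inr ⟨τ, isFaceOf_refl τ, rfl⟩))
  rw [Ext_eq_of_coneDim_eq h]
  rintro σ ((rfl | hσ) | ⟨ξ, hξ, rfl⟩)
  · exact Set.subset_union_right.trans (subset_coneHull _)
  · exact (IsFaceOf.subset hσ).trans (Set.subset_union_left.trans (subset_coneHull _))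
  · exact coneHull_mono (Set.union_subset_union_left _ (IsFaceOf.subset hξ))

theorem eq_or_isFaceOf_of_mem_raysIn_Ext {v : V n} {m : V n →ₗ[ℚ] ℚ}
    (h : coneDim (coneHull (τ ∪ coneHull {v})) = coneDim τ + 1) (hm : ∀ x ∈ τ, m x = 0)
    (hmv : m v = 1) {μ : Set (V n)} (hμ : μ ∈ raysIn (Ext τ (coneHull {v}))) :
    μ = coneHull {v} ∨ IsFaceOf μ τ := by
  obtain ⟨hμ, hμdim⟩ := hμ
  rw [Ext_eq_of_coneDim_eq h] at hμ
  rcases hμ with (hμ | hμ) | ⟨ξ, hξ, rfl⟩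
  · exact Or.inl hμ
  · exact Or.inr hμ
  dsimp only at hμdim ⊢
  -- a one-dimensional cone through `v` meets the hyperplane `m = 0` only in `0`
  refine Or.inl ?_
  have hv : v ∈ coneHull (ξ ∪ coneHull {v}) :=
    subset_coneHull _ (Or.inr (subset_coneHull _ rfl))
  have hv0 : v ≠ 0 := fun h => by simp [h] at hmv
  have hξ0 : ξ ⊆ coneHull {v} := by
    intro y hy
    have hy' := Submodule.subset_span (R := ℚ)
      (subset_coneHull (ξ ∪ coneHull {v}) (Set.mem_union_left _ hy))
    rw [span_eq_span_singleton_of_coneDim_eq_one hμdim hv hv0, SetLike.mem_coe,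
      Submodule.mem_span_singleton] at hy'
    obtain ⟨c, rfl⟩ := hy'
    have hc : c = 0 := by simpa [hmv] using hm _ (IsFaceOf.subset hξ hy)
    simpa [hc] using zero_mem_coneHull {v}
  rw [Set.union_eq_right.mpr hξ0, coneHull_coneHull]

end Ext

theorem IsPolyCone.forall_map_eq_zero_or_eq_coneHull {σ ν : Set (V n)} (hσ : IsPolyCone σ)
    (hsc : StronglyConvex σ) {m : V n →ₗ[ℚ] ℚ}
    (hrays : ∀ r ∈ raysOf σ, r = ν ∨ ∀ x ∈ r, m x = 0) :
    (∀ x ∈ σ, m x = 0) ∨ σ = coneHull ({x ∈ σ | m x = 0} ∪ ν) := by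
  have hσrays := hσ.subset_coneHull_raysOf hsc
  by_cases hν : ν ∈ raysOf σ
  · refine Or.inr (Set.Subset.antisymm (hσrays.trans (coneHull_mono ?_)) ?_)
    · rintro x ⟨r, hr, hx⟩
      rcases hrays r hr with rfl | hr0
      · exact Or.inr hx
      · exact Or.inl ⟨hr.1.subset hx, hr0 x hx⟩
    · obtain ⟨K, rfl⟩ := hσ.exists_eq_coe
      exact coneHull_subset_coe.mpr (Set.union_subset (Set.sep_subset _ _) hν.1.subset)
  · refine Or.inl fun x hx => map_eq_zero_of_mem_coneHull ?_ (hσrays hx)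
    rintro y ⟨r, hr, hy⟩
    exact (hrays r hr).resolve_left (fun h => hν (h ▸ hr)) y hy

theorem IsFaceOf.coneHull_union_singleton {ξ D : Set (V n)} (hξ : IsFaceOf ξ D)
    (hD : IsPolyCone D) {m : V n →ₗ[ℚ] ℚ} {v : V n} (hm : ∀ x ∈ D, m x = 0) (hmv : m v = 1) :
    IsFaceOf (coneHull (ξ ∪ coneHull {v})) (coneHull (D ∪ coneHull {v})) := by
  have hξpoly := hξ.isPolyCone hD
  obtain ⟨ℓ, hℓ, rfl⟩ := hξ
  -- `ℓ - ℓ v • m` extends `ℓ` from `D` to `D + ℚ≥0 v`, constant along `v`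
  have key : ∀ y ∈ D, ∀ c : ℚ, (ℓ - ℓ v • m) (y + c • v) = ℓ y := by
    intro y hy c
    simp [hm y hy, hmv, mul_comm]
  refine ⟨ℓ - ℓ v • m, fun x hx => ?_, Set.ext fun x => ?_⟩
  · obtain ⟨y, hy, c, -, rfl⟩ := (mem_coneHull_union_singleton hD).mp hx
    rw [key y hy c]
    exact hℓ y hy
  · rw [Set.mem_sep_iff, mem_coneHull_union_singleton hξpoly, mem_coneHull_union_singleton hD]
    constructor
    · rintro ⟨y, ⟨hy, hℓy⟩, c, hc, rfl⟩
      exact ⟨⟨y, hy, c, hc, rfl⟩, (key y hy c).trans hℓy⟩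
    · rintro ⟨⟨y, hy, c, hc, rfl⟩, h⟩
      exact ⟨y, ⟨hy, (key y hy c).symm.trans h⟩, c, hc, rfl⟩

section Fan

variable {X : Set (Set (V n))}

theorem IsFan.sep_subset (hX : IsFan X) (τ : Set (V n)) : IsFan {σ ∈ X | σ ⊆ τ} :=
  ⟨hX.1.subset (Set.sep_subset _ _), fun σ hσ => hX.2.1 σ hσ.1,
    fun σ hσ F hF => ⟨hX.2.2.1 σ hσ.1 F hF, hF.subset.trans hσ.2⟩,
    fun σ hσ σ' hσ' => hX.2.2.2 σ hσ.1 σ' hσ'.1⟩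

theorem IsFan.isFaceOf_of_mem_inter (hX : IsFan X) {ξ D : Set (V n)} (hξ : ξ ∈ X) (hD : D ∈ X)
    {x : V n} (hxξ : x ∈ ξ) (hxD : x ∈ D) (hrel : ∀ F, IsFaceOf F ξ → x ∈ F → F = ξ) :
    IsFaceOf ξ D := by
  obtain ⟨hξD, hDξ⟩ := hX.2.2.2 ξ hξ D hD
  rwa [hrel _ hξD ⟨hxξ, hxD⟩] at hDξ

theorem IsFan.mem_raysIn (hX : IsFan X) {σ r : Set (V n)} (hσ : σ ∈ X) (hr : r ∈ raysOf σ) :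
    r ∈ raysIn X :=
  ⟨hX.2.2.1 σ hσ r hr.1, hr.2⟩

end Fan

section EfficientSubdivision

variable {τ : Set (V n)} {v : V n} {m : V n →ₗ[ℚ] ℚ} {X' : Set (Set (V n))}

theorem sep_map_eq_zero_mem_and_subset (hτ : IsPolyCone τ) (hm : ∀ x ∈ τ, m x = 0) (hmv : m v = 1)
    (hX' : IsFan X') (hsupp : support X' = coneHull (τ ∪ coneHull {v})) {σ : Set (V n)}
    (hσ : σ ∈ X') : {x ∈ σ | m x = 0} ∈ X' ∧ {x ∈ σ | m x = 0} ⊆ τ := by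
  have hσP : ∀ x ∈ σ, 0 ≤ m x ∧ x - m x • v ∈ τ := fun x hx =>
    sub_smul_mem_of_mem_coneHull_union hτ hm hmv (hsupp ▸ Set.subset_sUnion_of_mem hσ hx)
  refine ⟨hX'.2.2.1 σ hσ _ ⟨m, fun x hx => (hσP x hx).1, rfl⟩, fun x ⟨hx, hmx⟩ => ?_⟩
  simpa [hmx] using (hσP x hx).2

theorem forall_map_eq_zero_or_eq_coneHull_of_mem (hm : ∀ x ∈ τ, m x = 0) (hX' : IsFan X')
    (hrays : ∀ r ∈ raysIn X', r = coneHull {v} ∨ IsFaceOf r τ) {σ : Set (V n)} (hσ : σ ∈ X') :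
    (∀ x ∈ σ, m x = 0) ∨ σ = coneHull ({x ∈ σ | m x = 0} ∪ coneHull {v}) :=
  (hX'.2.1 σ hσ).1.forall_map_eq_zero_or_eq_coneHull (hX'.2.1 σ hσ).2 fun r hr =>
    (hrays r (hX'.mem_raysIn hσ hr)).imp_right fun hrτ x hx => hm x (hrτ.subset hx)

theorem coneHull_union_singleton_mem (hτ : IsPolyCone τ) (hm : ∀ x ∈ τ, m x = 0)
    (hmv : m v = 1) (hX' : IsFan X') (hsupp : support X' = coneHull (τ ∪ coneHull {v}))
    (hrays : ∀ r ∈ raysIn X', r = coneHull {v} ∨ IsFaceOf r τ) {ξ : Set (V n)} (hξ : ξ ∈ X')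
    (hξτ : ξ ⊆ τ) : coneHull (ξ ∪ coneHull {v}) ∈ X' := by
  obtain ⟨x, hxξ, hrel⟩ := (hX'.2.1 ξ hξ).1.exists_mem_forall_isFaceOf
  have hmx : m x = 0 := hm x (hξτ hxξ)
  -- the cone `σ` of `X'` containing `x + v` sits above a cone `D ⊆ τ` having `ξ` as a face
  obtain ⟨σ, hσ, hxvσ⟩ : x + v ∈ support X' := hsupp ▸
    (mem_coneHull_union_singleton hτ).mpr ⟨x, hξτ hxξ, 1, zero_le_one, by rw [one_smul]⟩
  set D := {y ∈ σ | m y = 0}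
  obtain ⟨hD, hDτ⟩ := sep_map_eq_zero_mem_and_subset hτ hm hmv hX' hsupp hσ
  have hDpoly : IsPolyCone D := (hX'.2.1 D hD).1
  rcases forall_map_eq_zero_or_eq_coneHull_of_mem hm hX' hrays hσ with h0 | hσD
  · simpa [hmx, hmv] using h0 _ hxvσ
  have hxD : x ∈ D := by
    rw [hσD, mem_coneHull_union_singleton hDpoly] at hxvσ
    obtain ⟨y, hy, c, -, hxy⟩ := hxvσ
    have hc : 1 = c := by simpa [hmx, hmv, hy.2] using congrArg m hxy
    rw [← hc, one_smul, add_left_inj] at hxy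
    exact hxy ▸ hy
  rw [hσD] at hσ
  exact hX'.2.2.1 _ hσ _ ((hX'.isFaceOf_of_mem_inter hξ hD hxξ hxD hrel).coneHull_union_singleton
    hDpoly (fun y hy => hy.2) hmv)

theorem support_sep_subset (hτ : IsPolyCone τ) (hm : ∀ x ∈ τ, m x = 0) (hmv : m v = 1)
    (hX' : IsFan X') (hsupp : support X' = coneHull (τ ∪ coneHull {v})) :
    support {σ ∈ X' | σ ⊆ τ} = τ := by
  refine Set.Subset.antisymm (Set.sUnion_subset fun σ hσ => hσ.2) fun x hx => ?_
  obtain ⟨σ, hσ, hxσ⟩ : x ∈ support X' := hsupp ▸ subset_coneHull _ (Or.inl hx)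
  obtain ⟨hD, hDτ⟩ := sep_map_eq_zero_mem_and_subset hτ hm hmv hX' hsupp hσ
  exact ⟨_, ⟨hD, hDτ⟩, hxσ, hm x hx⟩

theorem isEfficient_sep_subset {ν : Set (V n)} (heff : IsEfficient X' (Ext τ ν))
    (hns : ¬ ν ⊆ τ) (hrays : ∀ r ∈ raysIn X', r = ν ∨ IsFaceOf r τ) :
    IsEfficient {σ ∈ X' | σ ⊆ τ} (faces τ) := by
  ext r
  constructor
  · rintro ⟨⟨hr, hrτ⟩, hdim⟩
    refine ⟨(hrays r ⟨hr, hdim⟩).resolve_left ?_, hdim⟩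
    rintro rfl
    exact hns hrτ
  · rintro ⟨hr, hdim⟩
    have hrX' : r ∈ raysIn X' := heff ▸ ⟨Or.inl (Or.inr hr), hdim⟩
    exact ⟨⟨hrX'.1, hr.subset⟩, hdim⟩

theorem eq_ExtSub_sep_subset (hτ : IsPolyCone τ) (hm : ∀ x ∈ τ, m x = 0) (hmv : m v = 1)
    (hdim : coneDim (coneHull (τ ∪ coneHull {v})) = coneDim τ + 1) (hX' : IsFan X')
    (hsupp : support X' = coneHull (τ ∪ coneHull {v}))
    (hrays : ∀ r ∈ raysIn X', r = coneHull {v} ∨ IsFaceOf r τ) (hνX : coneHull {v} ∈ X') :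
    X' = ExtSub {σ ∈ X' | σ ⊆ τ} τ (coneHull {v}) := by
  rw [ExtSub_eq_of_coneDim_eq hdim]
  refine Set.Subset.antisymm (fun σ hσ => ?_) ?_
  · obtain ⟨hD, hDτ⟩ := sep_map_eq_zero_mem_and_subset hτ hm hmv hX' hsupp hσ
    rcases forall_map_eq_zero_or_eq_coneHull_of_mem hm hX' hrays hσ with h0 | hσD
    · exact Or.inl (Or.inr ⟨hσ, fun x hx => hDτ ⟨hx, h0 x hx⟩⟩)
    · exact Or.inr ⟨_, ⟨_, ⟨hD, hDτ⟩, hDτ, isFaceOf_refl _⟩, hσD.symm⟩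
  · rintro σ ((rfl | hσ) | ⟨ξ, ⟨ζ, ⟨hζ, -⟩, hζτ, hξζ⟩, rfl⟩)
    · exact hνX
    · exact hσ.1
    · exact coneHull_union_singleton_mem hτ hm hmv hX' hsupp hrays (hX'.2.2.1 ζ hζ ξ hξζ)
        (hξζ.subset.trans hζτ)

end EfficientSubdivision

theorem efficient_subdivision_of_ext_is_ext_general {n : ℕ} (τ ν : Set (V n))
    (hτ : IsPolyCone τ)
    (hν : IsRay ν) (hns : ¬ ν ⊆ τ)
    (hdim : coneDim (coneHull (τ ∪ ν)) = coneDim τ + 1)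
    (X' : Set (Set (V n)))
    (hsub : IsSubdivision X' (Ext τ ν)) (heff : IsEfficient X' (Ext τ ν)) :
    ∃ T' : Set (Set (V n)), IsSubdivision T' (faces τ) ∧ IsEfficient T' (faces τ) ∧
      X' = ExtSub T' τ ν := by
  obtain ⟨v, -, rfl⟩ := hν.exists_eq_coneHull_singleton
  obtain ⟨m, hm, hmv⟩ := exists_dual_eq_zero_of_notMem (notMem_span_of_coneDim_eq hdim)
  have hmτ : ∀ x ∈ τ, m x = 0 := fun x hx => hm x (Submodule.subset_span hx)
  have hsupp := hsub.2.1.trans (support_Ext_eq_of_coneDim_eq hdim)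
  have hrays : ∀ r ∈ raysIn X', r = coneHull {v} ∨ IsFaceOf r τ := fun r hr =>
    eq_or_isFaceOf_of_mem_raysIn_Ext hdim hmτ hmv (heff ▸ hr)
  have hνX : coneHull {v} ∈ raysIn X' := heff ▸ ⟨Or.inl (Or.inl rfl), hν.2.2⟩
  refine ⟨{σ ∈ X' | σ ⊆ τ}, ⟨hsub.1.sep_subset τ, ?_, fun σ hσ => ⟨τ, isFaceOf_refl τ, hσ.2⟩⟩,
    isEfficient_sep_subset heff hns hrays,
    eq_ExtSub_sep_subset hτ hmτ hmv hdim hsub.1 hsupp hrays hνX.1⟩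
  rw [support_faces, support_sep_subset hτ hmτ hmv hsub.1 hsupp]

/-- When `dim Cone(τ, ν) = dim τ + 1`, every efficient subdivision of
`Ext(𝔗, ν)` is of the form `Ext(𝔗', ν)` for an efficient subdivision `𝔗'` of `𝔗`. -/
theorem efficient_subdivision_of_ext_is_ext {n : ℕ} (τ ν : Set (V n))
    (hτ : IsPolyCone τ) (hsc : StronglyConvex τ)
    (hν : IsRay ν) (hns : ¬ ν ⊆ τ) (hsc' : StronglyConvex (coneHull (τ ∪ ν)))
    (hdim : coneDim (coneHull (τ ∪ ν)) = coneDim τ + 1)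
    (X' : Set (Set (V n)))
    (hsub : IsSubdivision X' (Ext τ ν)) (heff : IsEfficient X' (Ext τ ν)) :
    ∃ T' : Set (Set (V n)), IsSubdivision T' (faces τ) ∧ IsEfficient T' (faces τ) ∧
      X' = ExtSub T' τ ν :=
  efficient_subdivision_of_ext_is_ext_general τ ν hτ hν hns hdim X' hsub heff

end ToricPaper
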